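/- arXiv:1608.03544 — 2 statements merged into one kernel-verified Lean document; each statement's English description precedes it below -/
import Mathlib

section
/- Let u_1,...,u_n be unit vectors in R^d, x ∈ R^d with ||x|| ≤ 1, satisfying the γ-gap assumption with respect to x. Let w_1,...,w_n ∈ R^d and cb_1,...,cb_n ≥ 0 satisfy |u_j^T x - w_j^T x| ≤ cb_j for all j and cb_j < γ/4 for all j. Fix a user index i and define the true neighborhood N_i = {j : u_j^T x = u_i^T x} and the estimated neighborhood N̂_i = {j : |w_i^T x - w_j^T x| ≤ cb_i + cb_j}. Then N̂_i = N_i. -/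
/-! Each proxy `⟪w j, x⟫` lies within `cb j < γ/4` of the true value `⟪u j, x⟫`. If two users
agree on `x`, their proxies differ by at most `cb i + cb j` by the triangle inequality. Conversely,
if the proxies differ by at most `cb i + cb j`, the true values differ by at most
`2 (cb i + cb j) < γ`, so the `γ`-gap forces them to agree. -/

theorem abs_sub_le_add_of_eq {α : Type*} [AddCommGroup α] [LinearOrder α] [IsOrderedAddMonoid α]
    {a b a' b' r s : α} (hab : a = b) (ha : |a - a'| ≤ r) (hb : |b - b'| ≤ s) :
    |a' - b'| ≤ r + s := by
  subst hab
  calc |a' - b'| ≤ |a' - a| + |a - b'| := abs_sub_le _ _ _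
    _ ≤ r + s := add_le_add (by rwa [abs_sub_comm]) hb

section

variable {α : Type*} [Field α] [LinearOrder α] [IsStrictOrderedRing α]

theorem eq_of_abs_sub_le_add_of_gap {a b a' b' r s γ : α} (hgap : a = b ∨ γ ≤ |a - b|)
    (ha : |a - a'| ≤ r) (hb : |b - b'| ≤ s) (hr : r < γ / 4) (hs : s < γ / 4)
    (h : |a' - b'| ≤ r + s) : a = b := by
  refine hgap.resolve_right fun hγ => ?_
  have hclose : |a - b| ≤ r + (r + s) + s :=
    calc |a - b| ≤ |a - b'| + |b' - b| := abs_sub_le _ _ _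
      _ ≤ |a - a'| + |a' - b'| + |b' - b| := add_le_add_left (abs_sub_le _ _ _) _
      _ ≤ r + (r + s) + s := add_le_add (add_le_add ha h) (by rwa [abs_sub_comm])
  linarith

theorem setOf_abs_sub_le_add_eq_setOf_eq {ι : Type*} (f g cb : ι → α) (γ : α)
    (hgap : ∀ i j, f i = f j ∨ γ ≤ |f i - f j|) (happ : ∀ j, |f j - g j| ≤ cb j)
    (hconf : ∀ j, cb j < γ / 4) (i : ι) :
    {j | |g i - g j| ≤ cb i + cb j} = {j | f j = f i} := by
  ext j
  constructor
  · intro h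
    exact (eq_of_abs_sub_le_add_of_gap (hgap i j) (happ i) (happ j) (hconf i) (hconf j) h).symm
  · intro h
    exact abs_sub_le_add_of_eq h.symm (happ i) (happ j)

end

theorem stmt_2_general {n d : ℕ} (u w : Fin n → EuclideanSpace ℝ (Fin d))
    (x : EuclideanSpace ℝ (Fin d)) (γ : ℝ)
    (hgap : ∀ i j : Fin n, (inner ℝ (u i) x : ℝ) = (inner ℝ (u j) x : ℝ) ∨
      γ ≤ |(inner ℝ (u i) x : ℝ) - (inner ℝ (u j) x : ℝ)|)
    (cb : Fin n → ℝ)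
    (happ : ∀ j, |(inner ℝ (u j) x : ℝ) - (inner ℝ (w j) x : ℝ)| ≤ cb j)
    (hconf : ∀ j, cb j < γ / 4) (i : Fin n) :
    {j : Fin n | |(inner ℝ (w i) x : ℝ) - (inner ℝ (w j) x : ℝ)| ≤ cb i + cb j}
      = {j : Fin n | (inner ℝ (u j) x : ℝ) = (inner ℝ (u i) x : ℝ)} :=
  setOf_abs_sub_le_add_eq_setOf_eq (fun j => inner ℝ (u j) x) (fun j => inner ℝ (w j) x) cb γ
    hgap happ hconf i

theorem stmt_2 {n d : ℕ} (u w : Fin n → EuclideanSpace ℝ (Fin d))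
    (x : EuclideanSpace ℝ (Fin d)) (γ : ℝ) (hγ : 0 < γ)
    (hu : ∀ i, ‖u i‖ = 1) (hx : ‖x‖ ≤ 1)
    (hgap : ∀ i j : Fin n, (inner ℝ (u i) x : ℝ) = (inner ℝ (u j) x : ℝ) ∨
      γ ≤ |(inner ℝ (u i) x : ℝ) - (inner ℝ (u j) x : ℝ)|)
    (cb : Fin n → ℝ) (hcb : ∀ j, 0 ≤ cb j)
    (happ : ∀ j, |(inner ℝ (u j) x : ℝ) - (inner ℝ (w j) x : ℝ)| ≤ cb j)
    (hconf : ∀ j, cb j < γ / 4) (i : Fin n) :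
    {j : Fin n | |(inner ℝ (w i) x : ℝ) - (inner ℝ (w j) x : ℝ)| ≤ cb i + cb j}
      = {j : Fin n | (inner ℝ (u j) x : ℝ) = (inner ℝ (u i) x : ℝ)} :=
  stmt_2_general u w x γ hgap cb happ hconf i
end

section
/- Let x_1,...,x_m ∈ R^d with ||x_s|| ≤ 1 for all s, and define M_0 = I and M_s = M_{s-1} + x_s x_s^T. Then Σ_{s=1}^m x_s^T M_{s-1}^{-1} x_s ≤ 2 log(det(M_m)) ≤ 2 d log(1 + m/d) ≤ 2 d log(1+m). -/
/-!
By the matrix determinant lemma, `det M_{s+1} = det M_s * (1 + u_s)` with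
`u_s = x_sᵀ M_s⁻¹ x_s`, and `M_s ≥ I` forces `0 ≤ u_s ≤ ‖x_s‖² ≤ 1`,
where `u ≤ 2 log (1 + u)`.
For the determinant bound, `tr M_m ≤ d + m`; summing the tangent-line bound
`log λ ≤ log c + λ / c - 1` over the eigenvalues of `M_m` with `c = 1 + m / d` gives
`log det M_m ≤ d log c`.
-/

open Matrix Finset Real

lemma le_two_mul_log_one_add {u : ℝ} (h₀ : 0 ≤ u) (h₂ : u ≤ 2) :
    u ≤ 2 * log (1 + u) := by
  have := le_log_one_add_of_nonneg h₀
  rw [div_le_iff₀ (by linarith)] at this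
  nlinarith

namespace Matrix

theorem PosSemidef.posDef_of_sub_one {n : Type*} [Finite n] [DecidableEq n] {A : Matrix n n ℝ}
    (hA : (A - 1).PosSemidef) : A.PosDef := by
  simpa using PosDef.one.add_posSemidef hA

variable {n : Type*} [Fintype n] [DecidableEq n]

theorem det_add_vecMulVec {R : Type*} [CommRing R] {A : Matrix n n R} (hA : IsUnit A.det)
    (u v : n → R) : (A + vecMulVec u v).det = A.det * (1 + v ⬝ᵥ (A⁻¹ *ᵥ u)) := by
  rw [vecMulVec_eq Unit, det_add_replicateCol_mul_replicateRow hA, det_unique (1 + _),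
    Matrix.mul_assoc, ← replicateCol_mulVec, add_apply, one_apply_eq,
    replicateRow_mul_replicateCol_apply]

theorem PosSemidef.dotProduct_self_le_of_sub_one {A : Matrix n n ℝ} (hA : (A - 1).PosSemidef)
    (z : n → ℝ) : z ⬝ᵥ z ≤ z ⬝ᵥ (A *ᵥ z) := by
  have := hA.dotProduct_mulVec_nonneg z
  rw [star_trivial, sub_mulVec, one_mulVec, dotProduct_sub] at this
  linarith

theorem PosSemidef.dotProduct_inv_mulVec_nonneg_of_sub_one {A : Matrix n n ℝ}
    (hA : (A - 1).PosSemidef) (v : n → ℝ) : 0 ≤ v ⬝ᵥ (A⁻¹ *ᵥ v) := by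
  simpa using hA.posDef_of_sub_one.posSemidef.inv.dotProduct_mulVec_nonneg v

theorem PosSemidef.dotProduct_inv_mulVec_le_of_sub_one {A : Matrix n n ℝ}
    (hA : (A - 1).PosSemidef) (v : n → ℝ) : v ⬝ᵥ (A⁻¹ *ᵥ v) ≤ v ⬝ᵥ v := by
  set y := A⁻¹ *ᵥ v
  have hAy : A *ᵥ y = v := by
    rw [mulVec_mulVec, mul_nonsing_inv _ hA.posDef_of_sub_one.det_pos.ne'.isUnit, one_mulVec]
  have hy : y ⬝ᵥ y ≤ v ⬝ᵥ y := by
    simpa [hAy, dotProduct_comm y v] using hA.dotProduct_self_le_of_sub_one y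
  -- `0 ≤ ‖v - y‖² = v ⬝ᵥ v - 2 v ⬝ᵥ y + y ⬝ᵥ y ≤ v ⬝ᵥ v - v ⬝ᵥ y`
  have := dotProduct_star_self_nonneg (v - y)
  simp only [star_trivial, sub_dotProduct, dotProduct_sub, dotProduct_comm y v] at this
  linarith

theorem PosDef.log_det_le_card_mul_log {A : Matrix n n ℝ} (hA : A.PosDef) {c : ℝ} (hc : 0 < c)
    (htr : A.trace ≤ Fintype.card n * c) : log A.det ≤ Fintype.card n * log c := by
  set μ := hA.isHermitian.eigenvalues
  have hμ : ∀ i, log (μ i) ≤ log c + (μ i / c - 1) := fun i => by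
    have := log_le_sub_one_of_pos (div_pos (hA.eigenvalues_pos i) hc)
    rw [log_div (hA.eigenvalues_pos i).ne' hc.ne'] at this
    linarith
  have htr' : A.trace = ∑ i, μ i := by simpa using hA.isHermitian.trace_eq_sum_eigenvalues
  have htrc : A.trace / c ≤ Fintype.card n := (div_le_iff₀ hc).2 htr
  calc log A.det = ∑ i, log (μ i) := by
        rw [hA.isHermitian.det_eq_prod_eigenvalues,
          ← log_prod fun i _ => (hA.eigenvalues_pos i).ne']
        simp
    _ ≤ ∑ i, (log c + (μ i / c - 1)) := sum_le_sum fun i _ => hμ i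
    _ = Fintype.card n * log c + (A.trace / c - Fintype.card n) := by
        simp [sum_add_distrib, sum_sub_distrib, ← sum_div, htr']
    _ ≤ Fintype.card n * log c := by linarith

end Matrix

section DesignMatrix

variable {n : Type*} [DecidableEq n] (x : ℕ → n → ℝ)

def designMatrix (t : ℕ) : Matrix n n ℝ := 1 + ∑ k ∈ range t, vecMulVec (x k) (x k)

theorem designMatrix_succ (t : ℕ) :
    designMatrix x (t + 1) = designMatrix x t + vecMulVec (x t) (x t) := by
  rw [designMatrix, designMatrix, sum_range_succ, add_assoc]

variable [Fintype n]

theorem posSemidef_designMatrix_sub_one (t : ℕ) : (designMatrix x t - 1).PosSemidef := by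
  simpa [designMatrix] using posSemidef_sum _ fun k _ => posSemidef_vecMulVec_self_star (x k)

theorem posDef_designMatrix (t : ℕ) : (designMatrix x t).PosDef :=
  (posSemidef_designMatrix_sub_one x t).posDef_of_sub_one

theorem trace_designMatrix (t : ℕ) :
    (designMatrix x t).trace = Fintype.card n + ∑ k ∈ range t, x k ⬝ᵥ x k := by
  simp [designMatrix, trace_sum, trace_vecMulVec]

theorem log_det_designMatrix (t : ℕ) : log (designMatrix x t).det =
    ∑ s ∈ range t, log (1 + x s ⬝ᵥ ((designMatrix x s)⁻¹ *ᵥ x s)) := by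
  induction t with
  | zero => simp [designMatrix]
  | succ t ih =>
    have hdet := (posDef_designMatrix x t).det_pos
    rw [designMatrix_succ, det_add_vecMulVec hdet.ne'.isUnit, log_mul hdet.ne', ih, sum_range_succ]
    have := (posSemidef_designMatrix_sub_one x t).dotProduct_inv_mulVec_nonneg_of_sub_one (x t)
    positivity

end DesignMatrix

theorem stmt_9 {d : ℕ} (hd : 0 < d) (m : ℕ) (x : ℕ → (Fin d → ℝ))
    (hx : ∀ s < m, dotProduct (x s) (x s) ≤ 1)
    (M : ℕ → Matrix (Fin d) (Fin d) ℝ)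
    (hM : ∀ t, M t = 1 + ∑ k ∈ Finset.range t, Matrix.vecMulVec (x k) (x k)) :
    (∑ s ∈ Finset.range m, dotProduct (x s) ((M s)⁻¹.mulVec (x s)))
        ≤ 2 * Real.log (M m).det ∧
    2 * Real.log (M m).det ≤ 2 * d * Real.log (1 + (m : ℝ) / d) ∧
    2 * d * Real.log (1 + (m : ℝ) / d) ≤ 2 * d * Real.log (1 + (m : ℝ)) := by
  obtain rfl : M = designMatrix x := funext hM
  have hd' : (1 : ℝ) ≤ d := Nat.one_le_cast.mpr hd
  refine ⟨?_, ?_, ?_⟩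
  · rw [log_det_designMatrix, mul_sum]
    gcongr with s hs
    have hA := posSemidef_designMatrix_sub_one x s
    exact le_two_mul_log_one_add (hA.dotProduct_inv_mulVec_nonneg_of_sub_one _)
      ((hA.dotProduct_inv_mulVec_le_of_sub_one _).trans <|
        (hx s (mem_range.mp hs)).trans one_le_two)
  · have htr : (designMatrix x m).trace ≤ Fintype.card (Fin d) * (1 + (m : ℝ) / d) := by
      rw [trace_designMatrix, Fintype.card_fin, mul_add, mul_one,
        mul_div_cancel₀ _ (by positivity)]
      gcongr
      simpa using sum_le_sum fun s hs => hx s (mem_range.mp hs)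
    have := (posDef_designMatrix x m).log_det_le_card_mul_log (by positivity) htr
    rw [Fintype.card_fin] at this
    linarith
  · gcongr
    exact div_le_self m.cast_nonneg hd'
end
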